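/- arXiv:0905.1469 — 2 statements merged into one kernel-verified Lean document; each statement's English description precedes it below -/
import Mathlib

section
/- Let G be a group and let σ_1, …, σ_{2m−1} ∈ G satisfy the braid relations. Set W = (Δ′_m)^{−1} (Δ_m)^{−1} Θ_m. Then for every product b = σ_{i_1}^{ε_1} σ_{i_2}^{ε_2} ⋯ σ_{i_k}^{ε_k} with 1 ≤ i_j ≤ m−1 and ε_j ∈ {+1, −1}, one has b · W = W · σ_{2m−i_1}^{ε_1} σ_{2m−i_2}^{ε_2} ⋯ σ_{2m−i_k}^{ε_k}. That is, conjugation by W carries a braid word b on the first block of m strands to the word ι^0_m(b̄*) on the last block of m strands, where b̄* replaces each letter σ_i^{ε} of b by σ_{m−i}^{ε} and ι^0_m shifts all indices by m. -/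
/-- `PiUp σ m i = σ (m+1) * σ (m+2) * ⋯ * σ (m+i)`. -/
def PiUp {G : Type*} [Group G] (σ : ℕ → G) (m i : ℕ) : G :=
  ((List.range i).map (fun k => σ (m + 1 + k))).prod

/-- `PiDown σ m i = σ (m-1) * σ (m-2) * ⋯ * σ (m-i)`. -/
def PiDown {G : Type*} [Group G] (σ : ℕ → G) (m i : ℕ) : G :=
  ((List.range i).map (fun k => σ (m - 1 - k))).prod

/-- `DeltaUp σ m = Π^m_{m-1} * Π^m_{m-2} * ⋯ * Π^m_1`. -/
def DeltaUp {G : Type*} [Group G] (σ : ℕ → G) (m : ℕ) : G :=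
  ((List.range (m - 1)).map (fun k => PiUp σ m (m - 1 - k))).prod

/-- `DeltaDown σ m = Π′^m_{m-1} * Π′^m_{m-2} * ⋯ * Π′^m_1`. -/
def DeltaDown {G : Type*} [Group G] (σ : ℕ → G) (m : ℕ) : G :=
  ((List.range (m - 1)).map (fun k => PiDown σ m (m - 1 - k))).prod

/-- `Theta σ m = σ m · Π′^m_{m-1} · Π^m_{m-1} · σ m · Π′^m_{m-2} · Π^m_{m-2} ⋯ σ m · Π′^m_1 · Π^m_1 · σ m`. -/
def Theta {G : Type*} [Group G] (σ : ℕ → G) (m : ℕ) : G :=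
  σ m * ((List.range (m - 1)).map
    (fun k => PiDown σ m (m - 1 - k) * PiUp σ m (m - 1 - k) * σ m)).prod

/-- The product of the braid word given by a list of letters `(i, ε)`,
where `(i, true)` stands for `σ i` and `(i, false)` for `σ i ⁻¹`. -/
def wordProd {G : Type*} [Group G] (σ : ℕ → G) (w : List (ℕ × Bool)) : G :=
  (w.map (fun p => if p.2 then σ p.1 else (σ p.1)⁻¹)).prod

/-!
For `1 ≤ i < m` every factor of `W = Δ′⁻¹ Δ⁻¹ Θ` moves `σ i` predictably. `Δ′` is the half twist on
`σ 1, …, σ (m-1)`, so it conjugates `σ i` to `σ (m-i)`. `Δ` involves only `σ (m+1), …, σ (2m-1)`, so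
it commutes with `σ (m-i)`. Sliding each `Π^m_r` of `Θ` rightwards into the rows built so far shows
that `Θ` is the crossing of the two blocks of `m` strands, the product of the rows
`σ (m+k) ⋯ σ (k+1)`, `k < m`; each row shifts the index of a generator it spans by one, so `Θ`
carries `σ j` to `σ (j+m)`. Hence `σ i W = W σ (2m-i)`, and the word identity follows letter by
letter.
-/

section ListProd

variable {G : Type*} [Monoid G]

theorem SemiconjBy.list_prod_map {α : Type*} {a : G} {l : List α} {f g : α → G}
    (h : ∀ x ∈ l, SemiconjBy a (f x) (g x)) :
    SemiconjBy a (l.map f).prod (l.map g).prod := by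
  induction l with
  | nil => exact SemiconjBy.one_right a
  | cons x l ih =>
    simp only [List.map_cons, List.prod_cons]
    exact (h x List.mem_cons_self).mul_right (ih fun y hy => h y (List.mem_cons_of_mem x hy))

theorem SemiconjBy.prod_range_map {a : G} {n : ℕ} {f g : ℕ → G}
    (h : ∀ k < n, SemiconjBy a (f k) (g k)) :
    SemiconjBy a ((List.range n).map f).prod ((List.range n).map g).prod :=
  list_prod_map fun k hk => h k (List.mem_range.mp hk)

end ListProd

section Chains

variable {G : Type*} [Monoid G] (σ : ℕ → G)

def descChain (t n : ℕ) : G := ((List.range n).map fun k => σ (t - k)).prod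

def ascChain (a n : ℕ) : G := ((List.range n).map fun k => σ (a + k)).prod

/-- The half twist on the generators `σ (t-r+1), …, σ t`, as rows `σ t ⋯ σ (t-r+1+k)`. -/
def halfTwist (t r : ℕ) : G := ((List.range r).map fun k => descChain σ t (r - k)).prod

/-- Rows `σ (a+k) ⋯ σ (a+k-p+1)` for `k < q`: a block of `p` strands crossing a block of `q`. -/
def blockCrossing (a p q : ℕ) : G := ((List.range q).map fun k => descChain σ (a + k) p).prod

theorem descChain_succ (t n : ℕ) : descChain σ t (n + 1) = σ t * descChain σ (t - 1) n := by
  simp only [descChain, List.prod_range_succ', Nat.sub_zero, Nat.sub_sub, Nat.add_comm 1]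

theorem descChain_succ_right (t n : ℕ) : descChain σ t (n + 1) = descChain σ t n * σ (t - n) :=
  List.prod_range_succ _ _

theorem ascChain_succ (a n : ℕ) : ascChain σ a (n + 1) = σ a * ascChain σ (a + 1) n := by
  simp only [ascChain, List.prod_range_succ', Nat.add_zero, Nat.add_assoc, Nat.add_comm 1]

theorem halfTwist_succ (t r : ℕ) :
    halfTwist σ t (r + 1) = descChain σ t (r + 1) * halfTwist σ t r := by
  simp only [halfTwist, List.prod_range_succ', Nat.sub_zero, Nat.succ_eq_add_one,
    Nat.add_sub_add_right]

theorem blockCrossing_succ (a p q : ℕ) :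
    blockCrossing σ a p (q + 1) = descChain σ a p * blockCrossing σ (a + 1) p q := by
  simp only [blockCrossing, List.prod_range_succ', Nat.add_zero, Nat.add_assoc, Nat.add_comm 1]

theorem Commute.descChain_right {x : G} {t l : ℕ} (h : ∀ k < l, Commute x (σ (t - k))) :
    Commute x (descChain σ t l) :=
  SemiconjBy.prod_range_map h

theorem Commute.ascChain_right {x : G} {a l : ℕ} (h : ∀ k < l, Commute x (σ (a + k))) :
    Commute x (ascChain σ a l) :=
  SemiconjBy.prod_range_map h

end Chains

structure BraidRelations {G : Type*} [Monoid G] (σ : ℕ → G) (n : ℕ) : Prop where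
  comm : ∀ i j, 1 ≤ i → j ≤ n → i + 2 ≤ j → Commute (σ i) (σ j)
  braid : ∀ i, 1 ≤ i → i + 1 ≤ n → σ i * σ (i + 1) * σ i = σ (i + 1) * σ i * σ (i + 1)

namespace BraidRelations

variable {G : Type*} [Monoid G] {σ : ℕ → G} {n : ℕ} (h : BraidRelations σ n)
include h

theorem commute {i j : ℕ} (h1 : 1 ≤ min i j) (hn : max i j ≤ n) (hfar : min i j + 2 ≤ max i j) :
    Commute (σ i) (σ j) := by
  rcases le_total i j with hij | hji
  · exact h.comm i j (by omega) (by omega) (by omega)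
  · exact (h.comm j i (by omega) (by omega) (by omega)).symm

theorem semiconjBy_descChain {t l i : ℕ} (hlt : l ≤ t) (htn : t ≤ n) (hlo : t + 1 ≤ i + l)
    (hi : i + 1 ≤ t) : SemiconjBy (descChain σ t l) (σ (i + 1)) (σ i) := by
  induction l generalizing t with
  | zero => omega
  | succ l ih =>
    rw [descChain_succ]
    by_cases hit : i + 2 ≤ t
    · exact SemiconjBy.mul_left (h.commute (by omega) (by omega) (by omega))
        (ih (by omega) (by omega) (by omega) (by omega))
    · obtain rfl : t = i + 1 := by omega
      obtain ⟨l, rfl⟩ : ∃ l', l = l' + 1 := ⟨l - 1, by omega⟩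
      rw [Nat.add_sub_cancel, descChain_succ, ← mul_assoc]
      refine SemiconjBy.mul_left ?_ (Commute.descChain_right σ fun k _ =>
        h.commute (by omega) (by omega) (by omega)).symm
      unfold SemiconjBy
      rw [mul_assoc, ← mul_assoc, ← mul_assoc, h.braid i (by omega) (by omega)]

theorem semiconjBy_descChain_descChain {t l : ℕ} (hlt : l + 1 ≤ t) (htn : t ≤ n) :
    SemiconjBy (descChain σ t (l + 1)) (descChain σ t l) (descChain σ (t - 1) l) :=
  SemiconjBy.prod_range_map fun k hk => by
    simpa only [show t - 1 - k + 1 = t - k by omega] using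
      h.semiconjBy_descChain (i := t - 1 - k) hlt htn (by omega) (by omega)

theorem semiconjBy_halfTwist {t r j : ℕ} (hrt : r ≤ t) (htn : t ≤ n) (hj : j < r) :
    SemiconjBy (halfTwist σ t r) (σ (t - j)) (σ (t + 1 - r + j)) := by
  induction r using Nat.strong_induction_on generalizing j with
  | _ r ih =>
    obtain _ | r := r
    · omega
    rw [halfTwist_succ]
    rcases Nat.lt_or_ge j r with hjr | hjr
    · refine SemiconjBy.mul_left ?_ (ih r (by omega) (by omega) hjr)
      simpa only [show t + 1 - r + j = t - r + j + 1 by omega,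
        show t + 1 - (r + 1) + j = t - r + j by omega] using
        h.semiconjBy_descChain (i := t - r + j) hrt htn (by omega) (by omega)
    obtain rfl : r = j := by omega
    obtain _ | r := r
    · simp [halfTwist, descChain, SemiconjBy]
    rw [halfTwist_succ, ← mul_assoc, show t + 1 - (r + 1 + 1) + (r + 1) = t by omega]
    -- The bottom generator commutes with the short rows and completes the second row to a copy
    -- of the first.
    refine SemiconjBy.mul_left ?_ (SemiconjBy.prod_range_map fun k _ =>
      Commute.descChain_right σ fun s _ => h.commute (by omega) (by omega) (by omega)).symm
    calc descChain σ t (r + 2) * descChain σ t (r + 1) * σ (t - (r + 1))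
        = descChain σ t (r + 2) * descChain σ t (r + 2) := by
          rw [mul_assoc, ← descChain_succ_right]
      _ = σ t * descChain σ (t - 1) (r + 1) * descChain σ t (r + 2) := by rw [← descChain_succ]
      _ = σ t * (descChain σ t (r + 2) * descChain σ t (r + 1)) := by
          rw [mul_assoc, (h.semiconjBy_descChain_descChain (by omega) htn).eq]

theorem semiconjBy_blockCrossing {a p q j : ℕ} (hpa : p ≤ a) (haq : a + q ≤ n + 1)
    (hlo : a + 1 ≤ j + p) (hj : j + 1 ≤ a) :
    SemiconjBy (blockCrossing σ a p q) (σ (j + q)) (σ j) := by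
  induction q generalizing a j with
  | zero => simp [blockCrossing, SemiconjBy]
  | succ q ih =>
    rw [blockCrossing_succ, show j + (q + 1) = j + 1 + q by omega]
    exact (h.semiconjBy_descChain hpa (by omega) (by omega) hj).mul_left
      (ih (by omega) (by omega) (by omega) (by omega))

theorem ascChain_mul_blockCrossing {a p q : ℕ} (hpa : p ≤ a) (haq : a + q ≤ n) :
    ascChain σ (a + 1) q * blockCrossing σ a p q = blockCrossing σ (a + 1) (p + 1) q := by
  induction q generalizing a p with
  | zero => simp [ascChain, blockCrossing]
  | succ q ih =>
    have hcomm : Commute (ascChain σ (a + 2) q) (descChain σ a p) :=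
      Commute.descChain_right σ fun k _ => (Commute.ascChain_right σ fun s _ =>
        h.commute (by omega) (by omega) (by omega)).symm
    rw [ascChain_succ, blockCrossing_succ, blockCrossing_succ, descChain_succ, Nat.add_sub_cancel,
      ← ih (by omega) (by omega), mul_assoc, ← mul_assoc (ascChain σ (a + 1 + 1) q), hcomm.eq]
    simp only [mul_assoc]

theorem mul_prod_eq_blockCrossing {a r : ℕ} (hra : r ≤ a) (han : a + r ≤ n) :
    σ a * ((List.range r).map fun k =>
      descChain σ (a - 1) (r - k) * ascChain σ (a + 1) (r - k) * σ a).prod =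
      blockCrossing σ a (r + 1) (r + 1) := by
  induction r with
  | zero => simp [blockCrossing, descChain]
  | succ r ih =>
    rw [List.prod_range_succ']
    simp only [Nat.sub_zero, Nat.succ_eq_add_one, Nat.add_sub_add_right]
    rw [blockCrossing_succ, ← h.ascChain_mul_blockCrossing (by omega) (by omega),
      ← ih (by omega) (by omega), descChain_succ σ a (r + 1)]
    simp only [mul_assoc]

end BraidRelations

section

variable {G : Type*} [Group G] {σ : ℕ → G} {m : ℕ}

theorem theta_eq_blockCrossing (h : BraidRelations σ (2 * m - 1)) (hm : 1 ≤ m) :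
    Theta σ m = blockCrossing σ m m m := by
  have := h.mul_prod_eq_blockCrossing (a := m) (r := m - 1) (by omega) (by omega)
  rwa [Nat.sub_add_cancel hm] at this

theorem commute_deltaUp (h : BraidRelations σ (2 * m - 1)) {j : ℕ} (hj : 1 ≤ j) (hjm : j < m) :
    Commute (σ j) (DeltaUp σ m) :=
  SemiconjBy.prod_range_map fun k _ =>
    Commute.ascChain_right σ fun s _ => h.commute (by omega) (by omega) (by omega)

theorem semiconjBy_deltaDown (h : BraidRelations σ (2 * m - 1)) {i : ℕ} (hi : 1 ≤ i)
    (him : i < m) :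
    SemiconjBy (DeltaDown σ m) (σ i) (σ (m - i)) := by
  have := h.semiconjBy_halfTwist (t := m - 1) (r := m - 1) (j := m - 1 - i) le_rfl (by omega)
    (by omega)
  rwa [show m - 1 - (m - 1 - i) = i by omega,
    show m - 1 + 1 - (m - 1) + (m - 1 - i) = m - i by omega] at this

theorem semiconjBy_deltaDown_inv_mul_deltaUp_inv_mul_theta (h : BraidRelations σ (2 * m - 1))
    {i : ℕ} (hi : 1 ≤ i) (him : i < m) :
    SemiconjBy ((DeltaDown σ m)⁻¹ * (DeltaUp σ m)⁻¹ * Theta σ m) (σ (2 * m - i)) (σ i) := by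
  have hΘ : SemiconjBy (Theta σ m) (σ (2 * m - i)) (σ (m - i)) := by
    rw [theta_eq_blockCrossing h (by omega), show 2 * m - i = m - i + m by omega]
    exact h.semiconjBy_blockCrossing le_rfl (by omega) (by omega) (by omega)
  have hΔ : Commute (DeltaUp σ m)⁻¹ (σ (m - i)) :=
    (commute_deltaUp h (by omega) (by omega)).symm.inv_left
  have hΔ' : SemiconjBy (DeltaDown σ m)⁻¹ (σ (m - i)) (σ i) :=
    (semiconjBy_deltaDown h hi him).inv_symm_left
  exact (hΔ'.mul_left hΔ).mul_left hΘ

theorem semiconjBy_wordProd_map {a : G} (f : ℕ → ℕ) {w : List (ℕ × Bool)}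
    (h : ∀ p ∈ w, SemiconjBy a (σ (f p.1)) (σ p.1)) :
    SemiconjBy a (wordProd σ (w.map fun p => (f p.1, p.2))) (wordProd σ w) := by
  rw [wordProd, wordProd, List.map_map]
  refine SemiconjBy.list_prod_map fun p hp => ?_
  dsimp only [Function.comp_apply]
  split_ifs
  exacts [h p hp, (h p hp).inv_right]

end

theorem conj_word_to_second_block_general {G : Type*} [Group G] (m : ℕ)
    (σ : ℕ → G)
    (hcomm : ∀ i j, 1 ≤ i → j ≤ 2 * m - 1 → i + 2 ≤ j → σ i * σ j = σ j * σ i)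
    (hbraid : ∀ i, 1 ≤ i → i + 1 ≤ 2 * m - 1 →
      σ i * σ (i + 1) * σ i = σ (i + 1) * σ i * σ (i + 1))
    (w : List (ℕ × Bool)) (hw : ∀ p ∈ w, 1 ≤ p.1 ∧ p.1 ≤ m - 1) :
    wordProd σ w * ((DeltaDown σ m)⁻¹ * (DeltaUp σ m)⁻¹ * Theta σ m) =
      ((DeltaDown σ m)⁻¹ * (DeltaUp σ m)⁻¹ * Theta σ m) *
        wordProd σ (w.map (fun p => (2 * m - p.1, p.2))) :=
  (semiconjBy_wordProd_map (fun i => 2 * m - i) fun p hp =>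
    semiconjBy_deltaDown_inv_mul_deltaUp_inv_mul_theta ⟨hcomm, hbraid⟩ (hw p hp).1
      (by have := hw p hp; omega)).eq.symm

/-- With W = (Δ′_m)⁻¹ (Δ_m)⁻¹ Θ_m, conjugation by W carries a braid word b on the
first block of m strands to the word ι^0_m(b̄*) on the last block of m strands:
b · W = W · (word with each letter σ_i^ε replaced by σ_{2m−i}^ε). -/
theorem conj_word_to_second_block {G : Type*} [Group G] (m : ℕ) (hm : 1 ≤ m)
    (σ : ℕ → G)
    (hcomm : ∀ i j, 1 ≤ i → j ≤ 2 * m - 1 → i + 2 ≤ j → σ i * σ j = σ j * σ i)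
    (hbraid : ∀ i, 1 ≤ i → i + 1 ≤ 2 * m - 1 →
      σ i * σ (i + 1) * σ i = σ (i + 1) * σ i * σ (i + 1))
    (w : List (ℕ × Bool)) (hw : ∀ p ∈ w, 1 ≤ p.1 ∧ p.1 ≤ m - 1) :
    wordProd σ w * ((DeltaDown σ m)⁻¹ * (DeltaUp σ m)⁻¹ * Theta σ m) =
      ((DeltaDown σ m)⁻¹ * (DeltaUp σ m)⁻¹ * Theta σ m) *
        wordProd σ (w.map (fun p => (2 * m - p.1, p.2))) :=
  conj_word_to_second_block_general m σ hcomm hbraid w hw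
end

section
/- In the symmetric group S_{2m} on {1, …, 2m}, let s_i denote the adjacent transposition (i, i+1). Then the element Θ_m, i.e. the product s_m · Π′^m_{m−1} · Π^m_{m−1} · s_m · Π′^m_{m−2} · Π^m_{m−2} ⋯ s_m · Π′^m_1 · Π^m_1 · s_m, equals the block-swap permutation that sends j ↦ m+j and m+j ↦ j for all 1 ≤ j ≤ m. -/
section aux

def swN : ℕ → Equiv.Perm ℕ := fun i => Equiv.swap i (i + 1)

lemma piUp_succ (m i : ℕ) : PiUp swN m (i+1) = PiUp swN m i * swN (m+1+i) := by
  simp [PiUp, List.range_succ]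

lemma piDown_succ (m i : ℕ) : PiDown swN m (i+1) = PiDown swN m i * swN (m-1-i) := by
  simp [PiDown, List.range_succ]

lemma piUp_apply (m i : ℕ) : ∀ x, PiUp swN m i x =
    if 1 ≤ i ∧ x = m + i + 1 then m + 1
    else if m + 1 ≤ x ∧ x ≤ m + i then x + 1 else x := by
  induction i with
  | zero =>
    intro x
    simp only [PiUp, List.range_zero, List.map_nil, List.prod_nil, Equiv.Perm.one_apply]
    split_ifs <;> omega
  | succ i ih =>
    intro x
    rw [piUp_succ, Equiv.Perm.mul_apply, ih]
    simp only [swN, Equiv.swap_apply_def]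
    split_ifs <;> omega

lemma piDown_apply (m i : ℕ) (hi : i < m) : ∀ x, PiDown swN m i x =
    if 1 ≤ i ∧ x = m - i then m
    else if m - i + 1 ≤ x ∧ x ≤ m then x - 1 else x := by
  induction i with
  | zero =>
    intro x
    simp only [PiDown, List.range_zero, List.map_nil, List.prod_nil, Equiv.Perm.one_apply]
    split_ifs <;> omega
  | succ i ih =>
    intro x
    rw [piDown_succ, Equiv.Perm.mul_apply, ih (by omega)]
    have h1 : m - 1 - i + 1 = m - i := by omega
    simp only [swN, Equiv.swap_apply_def, h1]
    split_ifs <;> omega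

def Cfun (m t : ℕ) : Equiv.Perm ℕ :=
  ((List.range t).map (fun k => PiDown swN m (t - k) * PiUp swN m (t - k) * swN m)).prod

lemma Cfun_succ (m t : ℕ) :
    Cfun m (t+1) = (PiDown swN m (t+1) * PiUp swN m (t+1) * swN m) * Cfun m t := by
  simp only [Cfun, List.range_succ_eq_map, List.map_cons, List.map_map, List.prod_cons,
    Nat.sub_zero]
  congr 2
  refine List.map_congr_left ?_
  intro k hk
  simp only [Function.comp_apply]
  have h2 : t + 1 - Nat.succ k = t - k := by omega
  rw [h2]

set_option maxHeartbeats 3000000 in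
lemma Cfun_apply (m t : ℕ) (hm : 1 ≤ m) (ht : t ≤ m - 1) : ∀ x, Cfun m t x =
    if t = 0 then x
    else if x < m - t then x
    else if x = m - t then m
    else if x ≤ m then x + t + 1
    else if x ≤ m + t then x - (t + 1)
    else if x = m + t + 1 then m + 1
    else x := by
  induction t with
  | zero => intro x; simp [Cfun]
  | succ t ih =>
    intro x
    rw [Cfun_succ]
    simp only [Equiv.Perm.mul_apply]
    obtain ⟨y, hy⟩ : ∃ y, Cfun m t x = y := ⟨_, rfl⟩
    rw [hy]
    rw [ih (by omega) x] at hy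
    obtain ⟨z, hz⟩ : ∃ z, swN m y = z := ⟨_, rfl⟩
    rw [hz]
    have hz' : z = if y = m then m + 1 else if y = m + 1 then m else y := by
      rw [← hz]; simp [swN, Equiv.swap_apply_def]
    obtain ⟨w, hw⟩ : ∃ w, PiUp swN m (t+1) z = w := ⟨_, rfl⟩
    rw [hw]
    rw [piUp_apply m (t+1) z] at hw
    rw [piDown_apply m (t+1) (by omega) w]
    split_ifs at hy hz' hw ⊢ <;> first | contradiction | omega

lemma theta_eq (m : ℕ) : Theta swN m = swN m * Cfun m (m - 1) := rfl

end aux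

/-- In the symmetric group on {1, …, 2m} (realized inside Equiv.Perm ℕ with
s_i = (i, i+1)), the permutation Θ_m is the block swap: j ↦ m+j and m+j ↦ j
for all 1 ≤ j ≤ m. -/
theorem theta_perm (m : ℕ) (hm : 1 ≤ m) :
    ∀ j, 1 ≤ j → j ≤ m →
      Theta (fun i => Equiv.swap i (i + 1)) m j = m + j ∧
      Theta (fun i => Equiv.swap i (i + 1)) m (m + j) = j := by
  intro j hj1 hj2
  have h : Theta (fun i => Equiv.swap i (i + 1)) m = Theta swN m := rfl
  rw [h, theta_eq]
  constructor <;>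
  · rw [Equiv.Perm.mul_apply, Cfun_apply m (m-1) hm le_rfl]
    simp only [swN, Equiv.swap_apply_def]
    split_ifs <;> omega
end
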